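/- arXiv:2412.00992 — 2 statements merged into one kernel-verified Lean document; each statement's English description precedes it below -/
import Mathlib

section
/- If γ² > 1/2 then the one-step replica symmetry breaking functional satisfies inf_{x∈[0,1]} f(x) < log 2 + γ²/2 = f(0), i.e. the annealed value is strictly beaten. -/
open MeasureTheory ProbabilityTheory Real Filter Topology

noncomputable section

def stdGauss : Measure ℝ := gaussianReal 0 1

/-- The one-step replica symmetry breaking functional
`f(x) = log 2 + ζ⁻¹ log E_η[cosh^ζ(ηγ√(2x))] + (γ²/2)(1 − 2x + (1−ζ)x²)`. -/
def fRSB (ζ γ : ℝ) (x : ℝ) : ℝ :=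
  Real.log 2 +
    ζ⁻¹ * Real.log (∫ η, (Real.cosh (η * γ * Real.sqrt (2 * x))) ^ ζ ∂ stdGauss) +
    γ ^ 2 / 2 * (1 - 2 * x + (1 - ζ) * x ^ 2)

/-!
Put `T = 2γ²x`, so that the integrand in `f(x)` is `cosh (√T η) ^ ζ`. For `u ≥ 1` and
`0 ≤ ζ ≤ 1` one has `u ^ ζ ≤ 1 + ζ (u - 1) - ζ (1 - ζ) / 2 ((u - 1)² - (u - 1)³)`. Taking
`u = cosh (√T η)`, the first two moments of `u - 1` are explicit exponential moments of the
Gaussian, and the cubic one is `O(T³)` because `cosh (a y) - 1 ≤ a² (cosh y - 1)` for `a² ≤ 1`.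
Hence `ζ⁻¹ log E cosh ^ ζ (√T η) ≤ T / 2 - (1 - ζ) T² / 4 + O(T³)`, i.e.
`f(x) - f(0) ≤ (1 - ζ) γ² x² (1/2 - γ²) + O(x³)`, which is negative for small `x > 0`.
-/

instance : IsProbabilityMeasure stdGauss :=
  inferInstanceAs (IsProbabilityMeasure (gaussianReal 0 1))

lemma integrable_exp_mul_stdGauss (t : ℝ) : Integrable (fun x => exp (t * x)) stdGauss :=
  integrable_exp_mul_gaussianReal t

lemma integral_exp_mul_stdGauss (t : ℝ) : ∫ x, exp (t * x) ∂stdGauss = exp (t ^ 2 / 2) := by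
  simpa [mgf, stdGauss] using congrFun (mgf_id_gaussianReal (μ := 0) (v := 1)) t

lemma integrable_exp_mul_abs_stdGauss (t : ℝ) : Integrable (fun x => exp (t * |x|)) stdGauss := by
  refine ((integrable_exp_mul_stdGauss t).add (integrable_exp_mul_stdGauss (-t))).mono'
    (by fun_prop) (ae_of_all _ fun x => ?_)
  rw [norm_of_nonneg (exp_pos _).le, Pi.add_apply]
  rcases abs_choice x with h | h <;> rw [h]
  · linarith [exp_pos (-t * x)]
  · rw [mul_neg, ← neg_mul]; linarith [exp_pos (t * x)]

lemma cosh_le_exp_abs (x : ℝ) : cosh x ≤ exp |x| := by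
  rw [← cosh_abs, cosh_eq]
  linarith [exp_le_exp.2 (neg_le_self (abs_nonneg x))]

lemma integrable_cosh_mul_rpow (b : ℝ) {ζ : ℝ} (hζ : 0 ≤ ζ) :
    Integrable (fun x => cosh (b * x) ^ ζ) stdGauss := by
  refine (integrable_exp_mul_abs_stdGauss (ζ * |b|)).mono' (by fun_prop) (ae_of_all _ fun x => ?_)
  rw [norm_of_nonneg (rpow_nonneg (cosh_pos _).le _), mul_assoc, ← abs_mul, mul_comm ζ, exp_mul]
  exact rpow_le_rpow (cosh_pos _).le (cosh_le_exp_abs _) hζ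

lemma integrable_cosh_mul_sub_one_pow (b : ℝ) (k : ℕ) :
    Integrable (fun x => (cosh (b * x) - 1) ^ k) stdGauss := by
  refine (integrable_cosh_mul_rpow b k.cast_nonneg).mono' (by fun_prop) (ae_of_all _ fun x => ?_)
  have h1 := one_le_cosh (b * x)
  rw [norm_of_nonneg (pow_nonneg (by linarith) _), rpow_natCast]
  exact pow_le_pow_left₀ (by linarith) (by linarith) k

lemma integrable_cosh_mul (b : ℝ) : Integrable (fun x => cosh (b * x)) stdGauss := by
  simpa using integrable_cosh_mul_rpow b zero_le_one

lemma integral_cosh_mul (b : ℝ) : ∫ x, cosh (b * x) ∂stdGauss = exp (b ^ 2 / 2) := by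
  simp_rw [cosh_eq, ← neg_mul]
  rw [integral_div, integral_add (integrable_exp_mul_stdGauss _) (integrable_exp_mul_stdGauss _),
    integral_exp_mul_stdGauss, integral_exp_mul_stdGauss, neg_sq]
  ring

lemma integral_cosh_mul_sub_one (b : ℝ) :
    ∫ x, (cosh (b * x) - 1) ∂stdGauss = exp (b ^ 2 / 2) - 1 := by
  rw [integral_sub (integrable_cosh_mul b) (integrable_const 1), integral_cosh_mul]
  simp

lemma integral_cosh_mul_sub_one_sq (b : ℝ) :
    ∫ x, (cosh (b * x) - 1) ^ 2 ∂stdGauss = exp (2 * b ^ 2) / 2 - 2 * exp (b ^ 2 / 2) + 3 / 2 := by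
  have h (x : ℝ) :
      (cosh (b * x) - 1) ^ 2 = cosh ((2 * b) * x) / 2 - 2 * (cosh (b * x) - 1) - 1 / 2 := by
    rw [mul_assoc, cosh_two_mul]; linear_combination (1 / 2) * cosh_sq (b * x)
  have hA : Integrable (fun x => cosh ((2 * b) * x) / 2) stdGauss :=
    (integrable_cosh_mul _).div_const _
  have hB : Integrable (fun x => 2 * (cosh (b * x) - 1)) stdGauss := by
    simpa using (integrable_cosh_mul_sub_one_pow b 1).const_mul 2
  have hAB : Integrable (fun x => cosh ((2 * b) * x) / 2 - 2 * (cosh (b * x) - 1)) stdGauss :=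
    hA.sub hB
  simp_rw [h]
  rw [integral_sub hAB (integrable_const _), integral_sub hA hB, integral_div,
    integral_const_mul, integral_cosh_mul, integral_cosh_mul_sub_one,
    show (2 * b) ^ 2 / 2 = 2 * b ^ 2 by ring]
  simp only [one_div, integral_const, probReal_univ, smul_eq_mul, one_mul]
  ring

lemma monotoneOn_Ici_of_hasDerivAt_nonneg {f f' : ℝ → ℝ} {a : ℝ}
    (hf : ∀ x ≥ a, HasDerivAt f (f' x) x) (hf' : ∀ x ≥ a, 0 ≤ f' x) : MonotoneOn f (Set.Ici a) :=
  monotoneOn_of_hasDerivWithinAt_nonneg (convex_Ici a)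
    (fun x hx => (hf x hx).continuousAt.continuousWithinAt)
    (fun x hx => (hf x (interior_subset hx)).hasDerivWithinAt)
    (fun x hx => hf' x (interior_subset hx))

-- The difference `g` of the two sides vanishes together with `g'` at `u = 1`, and
-- `g'' = ζ (1 - ζ) (3 (u - 1) - 1 + u ^ (ζ - 2)) ≥ 0` because `u ^ (ζ - 2) ≥ u⁻² ≥ 4 - 3 u`.
lemma rpow_le_one_add_mul_sub_sq_sub_cube {ζ u : ℝ} (hζ0 : 0 ≤ ζ) (hζ1 : ζ ≤ 1) (hu : 1 ≤ u) :
    u ^ ζ ≤ 1 + ζ * (u - 1) - ζ * (1 - ζ) / 2 * ((u - 1) ^ 2 - (u - 1) ^ 3) := by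
  set c := ζ * (1 - ζ) / 2
  have hc : 0 ≤ c := by positivity
  have hrpow (p : ℝ) {x : ℝ} (hx : 1 ≤ x) : HasDerivAt (fun x : ℝ => x ^ p) (p * x ^ (p - 1)) x :=
    hasDerivAt_rpow_const (Or.inl (by positivity))
  have hg (x : ℝ) (hx : x ≥ 1) :
      HasDerivAt (fun x => 1 + ζ * (x - 1) - c * ((x - 1) ^ 2 - (x - 1) ^ 3) - x ^ ζ)
        (ζ - c * (2 * (x - 1) - 3 * (x - 1) ^ 2) - ζ * x ^ (ζ - 1)) x := by
    have hx1 := (hasDerivAt_id' x).sub_const 1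
    refine ((((hasDerivAt_const x 1).add (hx1.const_mul ζ)).sub
      (((hx1.pow 2).sub (hx1.pow 3)).const_mul c)).sub (hrpow ζ hx)).congr_deriv ?_
    simp
  have hg' (x : ℝ) (hx : x ≥ 1) :
      HasDerivAt (fun x => ζ - c * (2 * (x - 1) - 3 * (x - 1) ^ 2) - ζ * x ^ (ζ - 1))
        (c * (6 * (x - 1) - 2 + 2 * x ^ (ζ - 2))) x := by
    have hx1 := (hasDerivAt_id' x).sub_const 1
    refine (((hasDerivAt_const x ζ).sub (((hx1.const_mul 2).sub
      ((hx1.pow 2).const_mul 3)).const_mul c)).sub ((hrpow (ζ - 1) hx).const_mul ζ)).congr_deriv ?_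
    rw [show ζ - 1 - 1 = ζ - 2 by ring]
    simp only [mul_one, Nat.cast_ofNat, Nat.add_one_sub_one, pow_one, zero_sub]
    ring
  have hg''_nonneg (x : ℝ) (hx : x ≥ 1) : 0 ≤ c * (6 * (x - 1) - 2 + 2 * x ^ (ζ - 2)) := by
    have hx0 : 0 < x := by linarith
    have hinv : (x ^ 2)⁻¹ ≤ x ^ (ζ - 2) := by
      rw [← rpow_natCast, ← rpow_neg hx0.le]
      exact rpow_le_rpow_of_exponent_le hx (by push_cast; linarith)
    have htangent : 4 - 3 * x ≤ (x ^ 2)⁻¹ := by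
      rw [inv_eq_one_div, le_div_iff₀ (by positivity)]
      nlinarith [mul_nonneg (sub_nonneg.2 hx) (by nlinarith : (0 : ℝ) ≤ 3 * x ^ 2 - x - 1)]
    exact mul_nonneg hc (by linarith)
  have hg'_nonneg (x : ℝ) (hx : x ≥ 1) :
      0 ≤ ζ - c * (2 * (x - 1) - 3 * (x - 1) ^ 2) - ζ * x ^ (ζ - 1) := by
    simpa using monotoneOn_Ici_of_hasDerivAt_nonneg hg' hg''_nonneg Set.self_mem_Ici hx hx
  have hg_nonneg := monotoneOn_Ici_of_hasDerivAt_nonneg hg hg'_nonneg Set.self_mem_Ici hu hu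
  simp only [sub_self, mul_zero, add_zero, ne_eq, OfNat.ofNat_ne_zero, not_false_eq_true,
    zero_pow, sub_zero, one_rpow] at hg_nonneg
  linarith

lemma cosh_mul_sub_one_le {a : ℝ} (ha : a ^ 2 ≤ 1) (y : ℝ) :
    cosh (a * y) - 1 ≤ a ^ 2 * (cosh y - 1) := by
  have hsum : HasSum (fun n => a ^ 2 * (y ^ (2 * n) / (2 * n).factorial) +
      if n = 0 then 1 - a ^ 2 else 0) (a ^ 2 * cosh y + (1 - a ^ 2)) :=
    ((hasSum_cosh y).mul_left _).add (hasSum_ite_eq 0 _)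
  have := hasSum_le (fun n => ?_) (hasSum_cosh (a * y)) hsum
  · linarith
  rcases Nat.eq_zero_or_pos n with rfl | hn
  · simp
  · rw [if_neg hn.ne', add_zero, mul_pow, pow_mul, mul_div_assoc]
    exact mul_le_mul_of_nonneg_right (pow_le_of_le_one (sq_nonneg a) ha hn.ne')
      (div_nonneg (by rw [pow_mul]; positivity) (by positivity))

lemma integral_cosh_mul_rpow_le {ζ a : ℝ} (hζ0 : 0 ≤ ζ) (hζ1 : ζ ≤ 1) (ha : a ^ 2 ≤ 1) :
    ∫ x, cosh (a * x) ^ ζ ∂stdGauss ≤ 1 + ζ * (exp (a ^ 2 / 2) - 1) - ζ * (1 - ζ) / 2 *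
      (exp (2 * a ^ 2) / 2 - 2 * exp (a ^ 2 / 2) + 3 / 2 -
        (a ^ 2) ^ 3 * ∫ x, (cosh x - 1) ^ 3 ∂stdGauss) := by
  set c := ζ * (1 - ζ) / 2
  have hc : 0 ≤ c := by positivity
  have hpt (x : ℝ) : cosh (a * x) ^ ζ ≤ 1 + ζ * (cosh (a * x) - 1) - c * (cosh (a * x) - 1) ^ 2
      + c * (a ^ 2) ^ 3 * (cosh x - 1) ^ 3 := by
    have hu := one_le_cosh (a * x)
    have hcube : (cosh (a * x) - 1) ^ 3 ≤ (a ^ 2) ^ 3 * (cosh x - 1) ^ 3 := by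
      rw [← mul_pow]
      exact pow_le_pow_left₀ (by linarith) (cosh_mul_sub_one_le ha x) 3
    linear_combination rpow_le_one_add_mul_sub_sq_sub_cube hζ0 hζ1 hu +
      mul_le_mul_of_nonneg_left hcube hc
  have h1 : Integrable (fun x => ζ * (cosh (a * x) - 1)) stdGauss := by
    simpa using (integrable_cosh_mul_sub_one_pow a 1).const_mul ζ
  have h2 : Integrable (fun x => c * (cosh (a * x) - 1) ^ 2) stdGauss :=
    (integrable_cosh_mul_sub_one_pow a 2).const_mul c
  have h3 : Integrable (fun x => c * (a ^ 2) ^ 3 * (cosh x - 1) ^ 3) stdGauss := by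
    simpa using (integrable_cosh_mul_sub_one_pow 1 3).const_mul (c * (a ^ 2) ^ 3)
  have h01 : Integrable (fun x => 1 + ζ * (cosh (a * x) - 1)) stdGauss :=
    (integrable_const _).add h1
  have h012 : Integrable (fun x => 1 + ζ * (cosh (a * x) - 1) - c * (cosh (a * x) - 1) ^ 2)
    stdGauss := h01.sub h2
  have hG : Integrable (fun x => 1 + ζ * (cosh (a * x) - 1) - c * (cosh (a * x) - 1) ^ 2
      + c * (a ^ 2) ^ 3 * (cosh x - 1) ^ 3) stdGauss := h012.add h3
  refine (integral_mono (integrable_cosh_mul_rpow a hζ0) hG hpt).trans_eq ?_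
  rw [integral_add h012 h3, integral_sub h01 h2, integral_add (integrable_const _) h1,
    integral_const_mul, integral_const_mul, integral_const_mul, integral_cosh_mul_sub_one,
    integral_cosh_mul_sub_one_sq]
  simp only [integral_const, probReal_univ, smul_eq_mul, mul_one]
  ring

lemma exp_half_le_cubic {T : ℝ} (hT0 : 0 ≤ T) (hT1 : T ≤ 2) :
    exp (T / 2) ≤ 1 + T / 2 + T ^ 2 / 8 + T ^ 3 / 36 := by
  have := exp_bound' (x := T / 2) (by positivity) (by linarith) (n := 3) (by norm_num)
  norm_num [Finset.sum_range_succ, Nat.factorial] at this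
  linarith

lemma cosh_rpow_bound_le_exp {ζ β κ T : ℝ} (hζ0 : 0 ≤ ζ) (hζ1 : ζ ≤ 1) (hβ : β ≤ ζ * (1 - ζ) / 4)
    (hκ : 0 ≤ κ) (hT0 : 0 ≤ T) (hT1 : T ≤ 1) :
    1 + ζ * (exp (T / 2) - 1) - ζ * (1 - ζ) / 2 *
        (exp (2 * T) / 2 - 2 * exp (T / 2) + 3 / 2 - T ^ 3 * κ)
      ≤ exp (ζ * T / 2 - β * T ^ 2) - (ζ * (1 - ζ) / 4 - β) * T ^ 2 + (1 + κ) * T ^ 3 := by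
  have hc0 : 0 ≤ ζ * (1 - ζ) := mul_nonneg hζ0 (by linarith)
  have hc1 : ζ * (1 - ζ) ≤ 1 / 4 := by nlinarith [sq_nonneg (ζ - 1 / 2)]
  have hA := mul_le_mul_of_nonneg_left (exp_half_le_cubic hT0 (by linarith))
    (by positivity : 0 ≤ ζ + ζ * (1 - ζ))
  have hB := mul_le_mul_of_nonneg_left (quadratic_le_exp_of_nonneg (by positivity : 0 ≤ 2 * T))
    (by positivity : 0 ≤ ζ * (1 - ζ))
  have hv : 0 ≤ ζ * T / 2 - β * T ^ 2 := by nlinarith [mul_nonneg hζ0 hT0]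
  have hC := quadratic_le_exp_of_nonneg hv
  have hcubic : (ζ + ζ * (1 - ζ)) / 36 + ζ * (1 - ζ) / 2 * κ + ζ * β / 2 ≤ 1 + κ := by
    nlinarith [mul_le_mul_of_nonneg_left hβ hζ0]
  linarith [mul_le_mul_of_nonneg_left hcubic (pow_nonneg hT0 3), sq_nonneg (β * T ^ 2)]

lemma exists_integral_cosh_sqrt_mul_rpow_lt_exp {ζ β : ℝ} (hζ0 : 0 ≤ ζ) (hζ1 : ζ ≤ 1)
    (hβ : β < ζ * (1 - ζ) / 4) :
    ∃ T, 0 < T ∧ T ≤ 1 ∧ ∫ x, cosh (√T * x) ^ ζ ∂stdGauss < exp (ζ * T / 2 - β * T ^ 2) := by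
  set κ := ∫ x, (cosh x - 1) ^ 3 ∂stdGauss
  have hκ : 0 ≤ κ := integral_nonneg fun x => pow_nonneg (sub_nonneg.2 (one_le_cosh x)) 3
  set m := ζ * (1 - ζ) / 4 - β with hm_def
  have hm : 0 < m := by linarith
  set T := min 1 (m / (1 + κ)) / 2 with hT_def
  have hT0 : 0 < T := by positivity
  have hT1 : T ≤ 1 := by linarith [min_le_left 1 (m / (1 + κ))]
  have hTm : (1 + κ) * T < m := by
    have : T < m / (1 + κ) := by linarith [min_le_right 1 (m / (1 + κ))]
    rwa [lt_div_iff₀ (by positivity), mul_comm] at this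
  refine ⟨T, hT0, hT1, ?_⟩
  have hsq : √T ^ 2 = T := sq_sqrt hT0.le
  have hE := integral_cosh_mul_rpow_le hζ0 hζ1 (a := √T) (by rw [hsq]; exact hT1)
  rw [hsq] at hE
  have hB := cosh_rpow_bound_le_exp hζ0 hζ1 hβ.le hκ hT0.le hT1
  nlinarith [mul_lt_mul_of_pos_right hTm (pow_pos hT0 2)]

lemma one_le_integral_cosh_mul_rpow (b : ℝ) {ζ : ℝ} (hζ : 0 ≤ ζ) :
    1 ≤ ∫ x, cosh (b * x) ^ ζ ∂stdGauss := by
  calc (1 : ℝ) = ∫ _, 1 ∂stdGauss := by simp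
    _ ≤ _ := integral_mono (integrable_const 1) (integrable_cosh_mul_rpow b hζ)
      fun x => one_le_rpow (one_le_cosh _) hζ

lemma fRSB_zero (ζ γ : ℝ) : fRSB ζ γ 0 = log 2 + γ ^ 2 / 2 := by
  simp [fRSB]

lemma log_two_sub_le_fRSB {ζ γ x : ℝ} (hζ0 : 0 ≤ ζ) (hζ1 : ζ ≤ 1) (hx : x ≤ 1) :
    log 2 - γ ^ 2 / 2 ≤ fRSB ζ γ x := by
  have hE : 1 ≤ ∫ η, cosh (η * γ * √(2 * x)) ^ ζ ∂stdGauss := by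
    simp_rw [mul_assoc, mul_comm _ (γ * √(2 * x))]
    exact one_le_integral_cosh_mul_rpow _ hζ0
  have hq : -1 ≤ 1 - 2 * x + (1 - ζ) * x ^ 2 := by nlinarith
  have := mul_nonneg (inv_nonneg.2 hζ0) (log_nonneg hE)
  unfold fRSB
  nlinarith [mul_le_mul_of_nonneg_left hq (by positivity : 0 ≤ γ ^ 2 / 2)]

lemma fRSB_lt_of_integral_lt_exp {ζ γ T : ℝ} (hζ : 0 < ζ) (hγ : γ ≠ 0)
    (h : ∫ x, cosh (√T * x) ^ ζ ∂stdGauss < exp (ζ * T / 2 - ζ * (1 - ζ) / (8 * γ ^ 2) * T ^ 2)) :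
    fRSB ζ γ (T / (2 * γ ^ 2)) < log 2 + γ ^ 2 / 2 := by
  have hint : ∫ η, cosh (η * γ * √(2 * (T / (2 * γ ^ 2)))) ^ ζ ∂stdGauss
      = ∫ x, cosh (√T * x) ^ ζ ∂stdGauss := by
    have hs : √(2 * (T / (2 * γ ^ 2))) = √T / |γ| := by
      rw [show 2 * (T / (2 * γ ^ 2)) = T / γ ^ 2 by field_simp, sqrt_div' _ (sq_nonneg γ),
        sqrt_sq_eq_abs]
    congr 1; ext η
    rw [hs, ← cosh_abs, ← cosh_abs (√T * η)]
    congr 2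
    rw [abs_mul, abs_mul, abs_mul, abs_div, abs_abs, abs_of_nonneg (sqrt_nonneg T)]
    field_simp
  have hpos : 0 < ∫ x, cosh (√T * x) ^ ζ ∂stdGauss :=
    one_pos.trans_le (one_le_integral_cosh_mul_rpow _ hζ.le)
  have hlog := mul_lt_mul_of_pos_left ((log_lt_iff_lt_exp hpos).2 h) (inv_pos.2 hζ)
  have hid : ζ⁻¹ * (ζ * T / 2 - ζ * (1 - ζ) / (8 * γ ^ 2) * T ^ 2)
      + γ ^ 2 / 2 * (1 - 2 * (T / (2 * γ ^ 2)) + (1 - ζ) * (T / (2 * γ ^ 2)) ^ 2) = γ ^ 2 / 2 := by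
    field_simp
    ring
  unfold fRSB
  rw [hint]
  linarith

theorem oneRSB_beats_annealed_general (ζ γ : ℝ) (hζ : ζ ∈ Set.Ioo (0:ℝ) 1)
    (hlow : 1 / 2 < γ ^ 2) :
    sInf (fRSB ζ γ '' Set.Icc 0 1) < Real.log 2 + γ ^ 2 / 2 ∧
      fRSB ζ γ 0 = Real.log 2 + γ ^ 2 / 2 := by
  obtain ⟨hζ0, hζ1⟩ := hζ
  have hγ : γ ≠ 0 := by rintro rfl; norm_num at hlow
  have hβ : ζ * (1 - ζ) / (8 * γ ^ 2) < ζ * (1 - ζ) / 4 :=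
    div_lt_div_of_pos_left (mul_pos hζ0 (by linarith)) (by norm_num) (by linarith)
  obtain ⟨T, hT0, hT1, hE⟩ := exists_integral_cosh_sqrt_mul_rpow_lt_exp hζ0.le hζ1.le hβ
  have hδ : T / (2 * γ ^ 2) ∈ Set.Icc (0 : ℝ) 1 :=
    ⟨by positivity, (div_le_one (by positivity)).2 (by linarith)⟩
  have hbdd : BddBelow (fRSB ζ γ '' Set.Icc 0 1) :=
    ⟨log 2 - γ ^ 2 / 2, by rintro _ ⟨x, hx, rfl⟩; exact log_two_sub_le_fRSB hζ0.le hζ1.le hx.2⟩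
  exact ⟨(csInf_le hbdd ⟨_, hδ, rfl⟩).trans_lt (fRSB_lt_of_integral_lt_exp hζ0 hγ hE),
    fRSB_zero ζ γ⟩

/-- **(The annealed value is strictly beaten at low temperature.)** If `γ² > 1/2` then
`inf_{x∈[0,1]} f(x) < log 2 + γ²/2 = f(0)`. -/
theorem oneRSB_beats_annealed (ζ γ : ℝ) (hζ : ζ ∈ Set.Ioo (0:ℝ) 1) (hγ : 0 < γ)
    (hlow : 1 / 2 < γ ^ 2) :
    sInf (fRSB ζ γ '' Set.Icc 0 1) < Real.log 2 + γ ^ 2 / 2 ∧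
      fRSB ζ γ 0 = Real.log 2 + γ ^ 2 / 2 :=
  oneRSB_beats_annealed_general ζ γ hζ hlow
end
end

section
/- Let (μ_n) and μ be probability measures on [0,1] with W1(μ_n,μ) = ∫_0^1 |μ_n^{-1}(p) − μ^{-1}(p)| dp → 0, and let ζ ∈ (0,1). Then: (i) μ^{-1}(ζ⁺) − μ^{-1}(ζ) ≥ limsup_{n→∞} (μ_n^{-1}(ζ⁺) − μ_n^{-1}(ζ)); (ii) μ^{-1}(ζ⁺) ≥ limsup_{n→∞} μ_n^{-1}(ζ⁺) ≥ μ^{-1}(ζ). -/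
open MeasureTheory ProbabilityTheory Real Filter Topology

noncomputable section

/-- Quantile function of a measure supported on `[0, a]`:
`ρ⁻¹(p) = inf {s ∈ [0,a] : ρ([0,s]) ≥ p}`. -/
def quantile (a : ℝ) (μ : Measure ℝ) (p : ℝ) : ℝ :=
  sInf {s | s ∈ Set.Icc 0 a ∧ p ≤ (μ (Set.Icc 0 s)).toReal}

/-- The right limit `ν⁻¹(p⁺) = lim_{q→p⁺} ν⁻¹(q)` of the (nondecreasing) quantile at `p`. -/
def quantilePlus (μ : Measure ℝ) (p : ℝ) : ℝ :=
  sInf (quantile 1 μ '' Set.Ioc p 1)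

/-- The Wasserstein-1 distance `W₁(μ,ν) = ∫₀¹ |μ⁻¹(p) − ν⁻¹(p)| dp`. -/
def W1 (μ ν : Measure ℝ) : ℝ :=
  ∫ p in (0:ℝ)..1, |quantile 1 μ p - quantile 1 ν p|

/-- A probability measure supported on `[0,1]` (an element of `Pr`). -/
def IsProbOn01 (μ : Measure ℝ) : Prop :=
  IsProbabilityMeasure μ ∧ μ (Set.Icc 0 1) = 1

namespace QGap

def qset (ν : Measure ℝ) (p : ℝ) : Set ℝ :=
  {s | s ∈ Set.Icc 0 1 ∧ p ≤ (ν (Set.Icc 0 s)).toReal}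

lemma quantile_eq (ν : Measure ℝ) (p : ℝ) : quantile 1 ν p = sInf (qset ν p) := rfl

lemma qset_bddBelow (ν : Measure ℝ) (p : ℝ) : BddBelow (qset ν p) :=
  ⟨0, fun _ hx => hx.1.1⟩

lemma one_mem_qset {ν : Measure ℝ} (hν : IsProbOn01 ν) {p : ℝ} (hp : p ≤ 1) :
    (1:ℝ) ∈ qset ν p := by
  refine ⟨⟨zero_le_one, le_refl 1⟩, ?_⟩
  rw [hν.2]; simpa using hp

lemma quantile_nonneg (ν : Measure ℝ) (p : ℝ) : 0 ≤ quantile 1 ν p :=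
  Real.sInf_nonneg fun _ hx => hx.1.1

lemma quantile_le_one (ν : Measure ℝ) (p : ℝ) : quantile 1 ν p ≤ 1 := by
  rcases Set.eq_empty_or_nonempty (qset ν p) with h | ⟨s, hs⟩
  · rw [quantile_eq, h, Real.sInf_empty]; exact zero_le_one
  · exact le_trans (csInf_le (qset_bddBelow ν p) hs) hs.1.2

lemma quantile_mem_Icc (ν : Measure ℝ) (p : ℝ) : quantile 1 ν p ∈ Set.Icc (0:ℝ) 1 :=
  ⟨quantile_nonneg ν p, quantile_le_one ν p⟩

lemma quantile_mono {ν : Measure ℝ} (hν : IsProbOn01 ν) :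
    MonotoneOn (quantile 1 ν) (Set.Iic 1) := by
  intro p hp q hq hpq
  exact csInf_le_csInf (qset_bddBelow ν p) ⟨1, one_mem_qset hν hq⟩
    (fun s hs => ⟨hs.1, hpq.trans hs.2⟩)

lemma quantile_monoOn (ν : Measure ℝ) (hν : IsProbOn01 ν) :
    MonotoneOn (quantile 1 ν) (Set.Icc 0 1) :=
  (quantile_mono hν).mono (fun x hx => hx.2)

lemma quantilePlus_mem_Icc (ν : Measure ℝ) {ζ : ℝ} (hζ : ζ < 1) :
    quantilePlus ν ζ ∈ Set.Icc (0:ℝ) 1 := by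
  constructor
  · exact Real.sInf_nonneg (by rintro x ⟨p, _, rfl⟩; exact quantile_nonneg ν p)
  · exact le_trans (csInf_le ⟨0, by rintro x ⟨p, _, rfl⟩; exact quantile_nonneg ν p⟩
      ⟨1, ⟨hζ, le_refl 1⟩, rfl⟩) (quantile_le_one ν 1)

lemma quantilePlus_le {ν : Measure ℝ} {ζ p : ℝ} (hp : p ∈ Set.Ioc ζ 1) :
    quantilePlus ν ζ ≤ quantile 1 ν p :=
  csInf_le ⟨0, by rintro x ⟨q, _, rfl⟩; exact quantile_nonneg ν q⟩ ⟨p, hp, rfl⟩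

lemma le_quantilePlus {ν : Measure ℝ} (hν : IsProbOn01 ν) {ζ : ℝ} (hζ : ζ < 1) :
    quantile 1 ν ζ ≤ quantilePlus ν ζ := by
  refine le_csInf ⟨quantile 1 ν 1, 1, ⟨hζ, le_refl 1⟩, rfl⟩ ?_
  rintro x ⟨p, hp, rfl⟩
  exact quantile_mono hν (Set.mem_Iic.2 hζ.le) (Set.mem_Iic.2 hp.2) hp.1.le


lemma key_integral {f g : ℝ → ℝ} (hf : MonotoneOn f (Set.Icc 0 1))
    (hg : MonotoneOn g (Set.Icc 0 1)) {a b : ℝ} (ha : 0 ≤ a) (hab : a < b) (hb : b ≤ 1) :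
    (b - a) * (f a - g b) ≤ ∫ p in (0:ℝ)..1, |f p - g p| := by
  have hsub : Set.uIcc a b ⊆ Set.Icc 0 1 := by
    rw [Set.uIcc_of_le hab.le]
    exact Set.Icc_subset_Icc ha hb
  have hsub01 : Set.uIcc (0:ℝ) 1 ⊆ Set.Icc 0 1 := by
    rw [Set.uIcc_of_le zero_le_one]
  have hfi : IntervalIntegrable f volume a b := (hf.mono hsub).intervalIntegrable
  have hgi : IntervalIntegrable g volume a b := (hg.mono hsub).intervalIntegrable
  have hfi1 : IntervalIntegrable f volume 0 1 := (hf.mono hsub01).intervalIntegrable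
  have hgi1 : IntervalIntegrable g volume 0 1 := (hg.mono hsub01).intervalIntegrable
  have habs1 : IntervalIntegrable (fun p => |f p - g p|) volume 0 1 := (hfi1.sub hgi1).abs
  have habs : IntervalIntegrable (fun p => |f p - g p|) volume a b := (hfi.sub hgi).abs
  have step1 : (b - a) * (f a - g b) ≤ ∫ p in a..b, (f p - g p) := by
    have := intervalIntegral.integral_mono_on (μ := volume) hab.le
      (intervalIntegrable_const (c := f a - g b)) (hfi.sub hgi) ?_
    · rw [intervalIntegral.integral_const, smul_eq_mul] at this
      linarith
    · intro x hx
      have hx1 : x ∈ Set.Icc (0:ℝ) 1 := ⟨ha.trans hx.1, hx.2.trans hb⟩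
      have ha1 : a ∈ Set.Icc (0:ℝ) 1 := ⟨ha, hab.le.trans hb⟩
      have hb1 : b ∈ Set.Icc (0:ℝ) 1 := ⟨ha.trans hab.le, hb⟩
      have h1 : f a ≤ f x := hf ha1 hx1 hx.1
      have h2 : g x ≤ g b := hg hx1 hb1 hx.2
      linarith
  have step2 : (∫ p in a..b, (f p - g p)) ≤ ∫ p in a..b, |f p - g p| :=
    intervalIntegral.integral_mono_on hab.le (hfi.sub hgi) habs
      (fun x _ => le_abs_self _)
  have step3 : (∫ p in a..b, |f p - g p|) ≤ ∫ p in (0:ℝ)..1, |f p - g p| :=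
    intervalIntegral.integral_mono_interval ha hab.le hb
      (Filter.Eventually.of_forall fun x => abs_nonneg _) habs1
  linarith

lemma quantile_left_cont {ν : Measure ℝ} (hν : IsProbOn01 ν) {ζ c : ℝ}
    (hζ0 : 0 < ζ) (hζ1 : ζ ≤ 1) (hc : c ∈ Set.Icc (0:ℝ) 1)
    (h : ∀ p' ∈ Set.Ico (0:ℝ) ζ, quantile 1 ν p' ≤ c) : quantile 1 ν ζ ≤ c := by
  haveI := hν.1
  have hF : ∀ k : ℕ, ENNReal.ofReal ζ ≤ ν (Set.Icc 0 (c + 1/(k+1))) := by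
    intro k
    have hεpos : (0:ℝ) < 1/(k+1) := by positivity
    have claim : ∀ p' ∈ Set.Ico (0:ℝ) ζ, p' ≤ (ν (Set.Icc 0 (c + 1/(k+1)))).toReal := by
      intro p' hp'
      have hq : quantile 1 ν p' ≤ c := h p' hp'
      have hlt : sInf (qset ν p') < c + 1/(k+1) := lt_of_le_of_lt hq (by linarith)
      obtain ⟨s, hs, hslt⟩ := exists_lt_of_csInf_lt ⟨1, one_mem_qset hν (hp'.2.le.trans hζ1)⟩ hlt
      calc p' ≤ (ν (Set.Icc 0 s)).toReal := hs.2
        _ ≤ (ν (Set.Icc 0 (c + 1/(k+1)))).toReal :=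
          ENNReal.toReal_mono (measure_ne_top ν _) (measure_mono (Set.Icc_subset_Icc_right hslt.le))
    have : ζ ≤ (ν (Set.Icc 0 (c + 1/(k+1)))).toReal := by
      by_contra hcon
      push_neg at hcon
      set x := (ν (Set.Icc 0 (c + 1/(k+1)))).toReal with hx
      have hx0 : 0 ≤ x := ENNReal.toReal_nonneg
      have := claim ((x + ζ)/2) ⟨by linarith, by linarith⟩
      linarith
    exact (ENNReal.ofReal_le_iff_le_toReal (measure_ne_top ν _)).2 this
  have hanti : Antitone (fun k : ℕ => Set.Icc (0:ℝ) (c + 1/(k+1))) := by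
    intro k m hkm
    apply Set.Icc_subset_Icc_right
    have : (1:ℝ)/(m+1) ≤ 1/(k+1) := by
      apply one_div_le_one_div_of_le (by positivity)
      have : (k:ℝ) ≤ m := Nat.cast_le.2 hkm
      linarith
    linarith
  have hiInter : (⋂ k : ℕ, Set.Icc (0:ℝ) (c + 1/(k+1))) = Set.Icc 0 c := by
    ext x
    simp only [Set.mem_iInter, Set.mem_Icc]
    constructor
    · rintro hx
      refine ⟨(hx 0).1, ?_⟩
      by_contra hcon
      push_neg at hcon
      obtain ⟨k, hk⟩ := exists_nat_one_div_lt (show (0:ℝ) < x - c by linarith)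
      have := (hx k).2
      push_cast at hk ⊢
      linarith
    · rintro ⟨hx0, hxc⟩ k
      have : (0:ℝ) < 1/(k+1) := by positivity
      exact ⟨hx0, by linarith⟩
  have htend := tendsto_measure_iInter_atTop (μ := ν)
    (fun k => (measurableSet_Icc).nullMeasurableSet) hanti ⟨0, measure_ne_top ν _⟩
  rw [hiInter] at htend
  have hlim : ENNReal.ofReal ζ ≤ ν (Set.Icc 0 c) := ge_of_tendsto' htend (fun k => hF k)
  have hFc : ζ ≤ (ν (Set.Icc 0 c)).toReal :=
    (ENNReal.ofReal_le_iff_le_toReal (measure_ne_top ν _)).1 hlim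
  exact csInf_le (qset_bddBelow ν ζ) ⟨hc, hFc⟩

end QGap



/-- **(Quantile gaps under W₁ convergence.)** If `W₁(μ_n, μ) → 0` for probability measures on
`[0,1]` and `ζ ∈ (0,1)`, then
(i) `μ⁻¹(ζ⁺) − μ⁻¹(ζ) ≥ limsup_n (μ_n⁻¹(ζ⁺) − μ_n⁻¹(ζ))`;
(ii) `μ⁻¹(ζ⁺) ≥ limsup_n μ_n⁻¹(ζ⁺) ≥ μ⁻¹(ζ)`. -/
theorem quantile_gap_limsup (μs : ℕ → Measure ℝ) (μ : Measure ℝ)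
    (hμs : ∀ n, IsProbOn01 (μs n)) (hμ : IsProbOn01 μ)
    (hW : Tendsto (fun n => W1 (μs n) μ) atTop (𝓝 0))
    (ζ : ℝ) (hζ : ζ ∈ Set.Ioo (0:ℝ) 1) :
    (quantilePlus μ ζ - quantile 1 μ ζ ≥
        limsup (fun n => quantilePlus (μs n) ζ - quantile 1 (μs n) ζ) atTop) ∧
      quantilePlus μ ζ ≥ limsup (fun n => quantilePlus (μs n) ζ) atTop ∧
      limsup (fun n => quantilePlus (μs n) ζ) atTop ≥ quantile 1 μ ζ := by
  have hW' : Tendsto (fun n => (∫ p in (0:ℝ)..1,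
      |quantile 1 (μs n) p - quantile 1 μ p|)) atTop (𝓝 0) := hW
  obtain ⟨hζ0, hζ1⟩ := hζ
  have h1 : ∀ a b : ℝ, 0 ≤ a → a < b → b ≤ 1 →
      limsup (fun n => quantile 1 (μs n) a) atTop ≤ quantile 1 μ b := by
    intro a b ha hab hb
    have hba : (0:ℝ) < b - a := by linarith
    have hev : ∀ n, quantile 1 (μs n) a ≤
        quantile 1 μ b + (∫ p in (0:ℝ)..1, |quantile 1 (μs n) p - quantile 1 μ p|) / (b - a) := by
      intro n
      have hk := QGap.key_integral (QGap.quantile_monoOn _ (hμs n))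
        (QGap.quantile_monoOn _ hμ) ha hab hb
      have h3 : quantile 1 (μs n) a - quantile 1 μ b ≤
          (∫ p in (0:ℝ)..1, |quantile 1 (μs n) p - quantile 1 μ p|) / (b - a) :=
        (le_div_iff₀ hba).2 (by nlinarith)
      linarith
    have htend : Tendsto (fun n => quantile 1 μ b +
        (∫ p in (0:ℝ)..1, |quantile 1 (μs n) p - quantile 1 μ p|) / (b - a)) atTop
        (𝓝 (quantile 1 μ b)) := by
      have := (hW'.div_const (b - a)).const_add (quantile 1 μ b)
      simpa using this
    calc limsup (fun n => quantile 1 (μs n) a) atTop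
        ≤ limsup (fun n => quantile 1 μ b +
            (∫ p in (0:ℝ)..1, |quantile 1 (μs n) p - quantile 1 μ p|) / (b - a)) atTop :=
          limsup_le_limsup (Eventually.of_forall hev)
            (isCoboundedUnder_le_of_le atTop fun n => QGap.quantile_nonneg _ _)
            htend.isBoundedUnder_le
      _ = quantile 1 μ b := htend.limsup_eq
  have h2 : ∀ a b : ℝ, 0 ≤ a → a < b → b ≤ 1 →
      quantile 1 μ a ≤ liminf (fun n => quantile 1 (μs n) b) atTop := by
    intro a b ha hab hb
    have hba : (0:ℝ) < b - a := by linarith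
    have hev : ∀ n, quantile 1 μ a -
        (∫ p in (0:ℝ)..1, |quantile 1 (μs n) p - quantile 1 μ p|) / (b - a) ≤
        quantile 1 (μs n) b := by
      intro n
      have hk := QGap.key_integral (QGap.quantile_monoOn _ hμ)
        (QGap.quantile_monoOn _ (hμs n)) ha hab hb
      have hint : (∫ p in (0:ℝ)..1, |quantile 1 μ p - quantile 1 (μs n) p|)
          = ∫ p in (0:ℝ)..1, |quantile 1 (μs n) p - quantile 1 μ p| :=
        intervalIntegral.integral_congr (fun p _ => abs_sub_comm _ _)
      rw [hint] at hk
      have h3 : quantile 1 μ a - quantile 1 (μs n) b ≤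
          (∫ p in (0:ℝ)..1, |quantile 1 (μs n) p - quantile 1 μ p|) / (b - a) :=
        (le_div_iff₀ hba).2 (by nlinarith)
      linarith
    have htend : Tendsto (fun n => quantile 1 μ a -
        (∫ p in (0:ℝ)..1, |quantile 1 (μs n) p - quantile 1 μ p|) / (b - a)) atTop
        (𝓝 (quantile 1 μ a)) := by
      have := ((hW'.div_const (b - a)).const_sub (quantile 1 μ a))
      simpa using this
    calc quantile 1 μ a
        = liminf (fun n => quantile 1 μ a -
            (∫ p in (0:ℝ)..1, |quantile 1 (μs n) p - quantile 1 μ p|) / (b - a)) atTop :=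
          htend.liminf_eq.symm
      _ ≤ liminf (fun n => quantile 1 (μs n) b) atTop :=
          liminf_le_liminf (Eventually.of_forall hev)
            htend.isBoundedUnder_ge
            (isCoboundedUnder_ge_of_le atTop fun n => QGap.quantile_le_one _ _)
  have hbP : ∀ n, quantilePlus (μs n) ζ ∈ Set.Icc (0:ℝ) 1 :=
    fun n => QGap.quantilePlus_mem_Icc _ hζ1
  have hbq : ∀ n, quantile 1 (μs n) ζ ∈ Set.Icc (0:ℝ) 1 :=
    fun n => QGap.quantile_mem_Icc _ _
  have hbddP : IsBoundedUnder (· ≤ ·) atTop (fun n => quantilePlus (μs n) ζ) :=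
    isBoundedUnder_of ⟨1, fun n => (hbP n).2⟩
  have hbddP' : IsBoundedUnder (· ≥ ·) atTop (fun n => quantilePlus (μs n) ζ) :=
    isBoundedUnder_of ⟨0, fun n => (hbP n).1⟩
  have hbddq : IsBoundedUnder (· ≤ ·) atTop (fun n => quantile 1 (μs n) ζ) :=
    isBoundedUnder_of ⟨1, fun n => (hbq n).2⟩
  have hbddq' : IsBoundedUnder (· ≥ ·) atTop (fun n => quantile 1 (μs n) ζ) :=
    isBoundedUnder_of ⟨0, fun n => (hbq n).1⟩
  have hiia : limsup (fun n => quantilePlus (μs n) ζ) atTop ≤ quantilePlus μ ζ := by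
    refine le_csInf ⟨quantile 1 μ 1, 1, ⟨hζ1, le_refl 1⟩, rfl⟩ ?_
    rintro x ⟨p, hp, rfl⟩
    have hap : (ζ + p)/2 < p := by linarith [hp.1]
    have haζ : ζ < (ζ + p)/2 := by linarith [hp.1]
    calc limsup (fun n => quantilePlus (μs n) ζ) atTop
        ≤ limsup (fun n => quantile 1 (μs n) ((ζ + p)/2)) atTop :=
          limsup_le_limsup (Eventually.of_forall fun n =>
              QGap.quantilePlus_le ⟨haζ, hap.le.trans hp.2⟩)
            hbddP'.isCoboundedUnder_le
            (isBoundedUnder_of ⟨1, fun n => QGap.quantile_le_one _ _⟩)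
      _ ≤ quantile 1 μ p := h1 _ p (by linarith) hap hp.2
  have hliB : quantile 1 μ ζ ≤ liminf (fun n => quantile 1 (μs n) ζ) atTop := by
    refine QGap.quantile_left_cont hμ hζ0 hζ1.le ⟨?_, ?_⟩ ?_
    · exact le_liminf_of_le hbddq.isCoboundedUnder_ge
        (Eventually.of_forall fun n => (hbq n).1)
    · exact (liminf_le_limsup hbddq hbddq').trans
        (limsup_le_of_le hbddq'.isCoboundedUnder_le
          (Eventually.of_forall fun n => (hbq n).2))
    · exact fun p' hp' => h2 p' ζ hp'.1 hp'.2 hζ1.le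
  have hiib : quantile 1 μ ζ ≤ limsup (fun n => quantilePlus (μs n) ζ) atTop := by
    refine hliB.trans (le_trans ?_ (liminf_le_limsup hbddP hbddP'))
    exact liminf_le_liminf (Eventually.of_forall fun n => QGap.le_quantilePlus (hμs n) hζ1)
      hbddq' (isCoboundedUnder_ge_of_le atTop fun n => (hbP n).2)
  refine ⟨?_, hiia, hiib⟩
  refine le_of_forall_pos_le_add ?_
  intro ε hε
  have h1' : ∀ᶠ n in atTop, quantilePlus (μs n) ζ < quantilePlus μ ζ + ε/2 :=
    eventually_lt_of_limsup_lt (lt_of_le_of_lt hiia (by linarith)) hbddP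
  have h2' : ∀ᶠ n in atTop, quantile 1 μ ζ - ε/2 < quantile 1 (μs n) ζ :=
    eventually_lt_of_lt_liminf (lt_of_lt_of_le (by linarith) hliB) hbddq'
  refine limsup_le_of_le ?_ ?_
  · exact isCoboundedUnder_le_of_le atTop (x := -1)
      fun n => by linarith [(hbP n).1, (hbq n).2]
  · filter_upwards [h1', h2'] with n ha hb
    linarith
end
end
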